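/- Let G be a graph, let C be a cut-set of G of size s, write G − C = H_1 ∪ ⋯ ∪ H_m where each H_i is a connected component of G − C, and for each i ∈ [m] let C_i be any subset of C and let L_i be the subgraph of G induced by V(H_i) ∪ C_i. Then γ_P(G) ≤ ∑_{i=1}^m γ_P(L_i) + s; indeed, if B_i is a minimum power dominating set of L_i for each i, then C ∪ ⋃_{i=1}^m B_i is a power dominating set of G. -/

import Mathlib

open SimpleGraph

/-- The set of vertices eventually observed in the power domination process started
from `S`: first the closed neighborhood of `S` is observed (domination step), then
repeatedly any vertex that is the unique unobserved neighbor of an observed vertex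
becomes observed (propagation step). -/
inductive PDObserved {V : Type*} (G : SimpleGraph V) (S : Set V) : V → Prop
  | init (v : V) (hv : v ∈ S) : PDObserved G S v
  | dom (u v : V) (hu : u ∈ S) (h : G.Adj u v) : PDObserved G S v
  | force (u v : V) (hu : PDObserved G S u) (h : G.Adj u v)
      (hall : ∀ w, G.Adj u w → w ≠ v → PDObserved G S w) : PDObserved G S v

/-- `S` is a power dominating set of `G` if every vertex is eventually observed. -/
def IsPowerDominatingSet {V : Type*} (G : SimpleGraph V) (S : Set V) : Prop :=
  ∀ v, PDObserved G S v

/-- The power domination number: the minimum cardinality of a power dominating set. -/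
noncomputable def powerDominationNumber {V : Type*} (G : SimpleGraph V) : ℕ :=
  sInf {n | ∃ S : Set V, S.ncard = n ∧ IsPowerDominatingSet G S}

/-- A family `π` indexed by a type with at least two elements is a failed power
dominating partition of `G` if it is a partition of `V(G)` into nonempty parts and
for each part `π i`, the complement `V(G) - π i` is not a power dominating set. -/
def IsFailedPDPartition {V : Type*} (G : SimpleGraph V) {ι : Type*} (π : ι → Set V) : Prop :=
  2 ≤ Nat.card ι ∧ (∀ i, (π i).Nonempty) ∧ Pairwise (Function.onFun Disjoint π) ∧
    (⋃ i, π i) = Set.univ ∧ ∀ i, ¬ IsPowerDominatingSet G ((π i)ᶜ)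

/-- `ℓ_G`: the maximum `k` such that `G` has a failed power dominating partition into
`k` parts, or `1` if no failed power dominating partition exists. -/
noncomputable def ellPD {V : Type*} (G : SimpleGraph V) : ℕ :=
  sSup ({1} ∪ {k | ∃ π : Fin k → Set V, IsFailedPDPartition G π})

/-!
A vertex outside the cut-set `C` lies in some component `H_i`, and all its neighbours in `G`
lie in `H_i ∪ C`. Since `C` is observed from the start, every force `u → v` that a vertex
`u ∈ H_i` performs while `B_i` observes `L_i` is also a valid force in `G`; a vertex of `C_i`
needs no forcing in `G`, because it dominates its neighbours directly.
-/

section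

variable {V : Type*} {G : SimpleGraph V}

theorem PDObserved.of_induce {S A : Set V} {T : Set A} (hT : Subtype.val '' T ⊆ S)
    (hclosed : ∀ u ∈ A \ S, ∀ w, G.Adj u w → w ∈ S ∪ A) {v : A}
    (hv : PDObserved (G.induce A) T v) : PDObserved G S v := by
  induction hv with
  | init v hv => exact .init _ (hT ⟨v, hv, rfl⟩)
  | dom u v hu h => exact .dom _ _ (hT ⟨u, hu, rfl⟩) h
  | force u v _ h _ ihu ihall =>
    by_cases huS : (u : V) ∈ S
    · exact .dom _ _ huS h
    · refine .force _ _ ihu h fun w hw hwv => ?_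
      rcases hclosed u ⟨u.2, huS⟩ w hw with hwS | hwA
      · exact .init _ hwS
      · exact ihall ⟨w, hwA⟩ hw fun e => hwv (congrArg Subtype.val e)

section Separation

variable {ι : Type*} {C : Set V} {Hs : ι → Set V}

theorem mem_union_of_adj_of_separated (hcover : ⋃ i, Hs i = Cᶜ)
    (hsep : ∀ i j, i ≠ j → ∀ u ∈ Hs i, ∀ v ∈ Hs j, ¬ G.Adj u v)
    {i : ι} {u w : V} (hu : u ∈ Hs i) (hadj : G.Adj u w) : w ∈ C ∪ Hs i := by
  by_cases hwC : w ∈ C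
  · exact .inl hwC
  · obtain ⟨j, hwj⟩ := Set.mem_iUnion.mp (hcover ▸ hwC : w ∈ ⋃ j, Hs j)
    obtain rfl | hji := eq_or_ne j i
    · exact .inr hwj
    · exact absurd hadj (hsep i j hji.symm u hu w hwj)

theorem IsPowerDominatingSet.union_iUnion_of_separated {Cs : ι → Set V}
    (hcover : ⋃ i, Hs i = Cᶜ) (hsep : ∀ i j, i ≠ j → ∀ u ∈ Hs i, ∀ v ∈ Hs j, ¬ G.Adj u v)
    (hCs : ∀ i, Cs i ⊆ C) {B : ∀ i, Set ↥(Hs i ∪ Cs i)}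
    (hB : ∀ i, IsPowerDominatingSet (G.induce (Hs i ∪ Cs i)) (B i)) :
    IsPowerDominatingSet G (C ∪ ⋃ i, Subtype.val '' B i) := by
  intro v
  by_cases hvC : v ∈ C
  · exact .init _ (.inl hvC)
  obtain ⟨i, hvi⟩ := Set.mem_iUnion.mp (hcover ▸ hvC : v ∈ ⋃ i, Hs i)
  have hBi : Subtype.val '' B i ⊆ C ∪ ⋃ i, Subtype.val '' B i :=
    Set.subset_union_of_subset_right (Set.subset_iUnion (fun i => Subtype.val '' B i) i) _
  refine PDObserved.of_induce hBi (fun u ⟨hu, huS⟩ w hw => ?_) (hB i ⟨v, .inl hvi⟩)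
  have huH : u ∈ Hs i := hu.resolve_right fun huC => huS (.inl (hCs i huC))
  rcases mem_union_of_adj_of_separated hcover hsep huH hw with hwC | hwH
  · exact .inl (.inl hwC)
  · exact .inr (.inl hwH)

end Separation

theorem powerDominationNumber_le_ncard {S : Set V} (hS : IsPowerDominatingSet G S) :
    powerDominationNumber G ≤ S.ncard :=
  Nat.sInf_le ⟨S, rfl, hS⟩

theorem exists_isPowerDominatingSet_ncard_eq (G : SimpleGraph V) :
    ∃ S : Set V, IsPowerDominatingSet G S ∧ S.ncard = powerDominationNumber G := by
  obtain ⟨S, hcard, hS⟩ := Nat.sInf_mem (s := {n | ∃ S : Set V, S.ncard = n ∧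
    IsPowerDominatingSet G S}) ⟨_, Set.univ, rfl, fun v => .init v (Set.mem_univ v)⟩
  exact ⟨S, hS, hcard⟩

end

theorem cutset_upper_bound_general_general {V : Type*} (G : SimpleGraph V)
    (C : Set V) (s : ℕ) (hC : C.ncard = s)
    (m : ℕ) (Hs : Fin m → Set V)
    (hcover : (⋃ i, Hs i) = Cᶜ)
    (hsep : ∀ i j, i ≠ j → ∀ u ∈ Hs i, ∀ v ∈ Hs j, ¬ G.Adj u v)
    (Cs : Fin m → Set V) (hCs : ∀ i, Cs i ⊆ C) :
    powerDominationNumber G ≤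
      (∑ i, powerDominationNumber (G.induce (Hs i ∪ Cs i))) + s ∧
    ∀ B : (i : Fin m) → Set (↥(Hs i ∪ Cs i)),
      (∀ i, IsPowerDominatingSet (G.induce (Hs i ∪ Cs i)) (B i) ∧
        (B i).ncard = powerDominationNumber (G.induce (Hs i ∪ Cs i))) →
      IsPowerDominatingSet G (C ∪ ⋃ i, Subtype.val '' B i) := by
  refine ⟨?_, fun B hB => .union_iUnion_of_separated hcover hsep hCs fun i => (hB i).1⟩
  choose B hB hBcard using fun i => exists_isPowerDominatingSet_ncard_eq (G.induce (Hs i ∪ Cs i))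
  calc powerDominationNumber G ≤ (C ∪ ⋃ i, Subtype.val '' B i).ncard :=
        powerDominationNumber_le_ncard (.union_iUnion_of_separated hcover hsep hCs hB)
    _ ≤ C.ncard + (⋃ i, Subtype.val '' B i).ncard := Set.ncard_union_le _ _
    _ ≤ s + ∑ i, (Subtype.val '' B i).ncard := by
        rw [hC]; exact Nat.add_le_add_left (Set.ncard_iUnion_le_of_fintype _) s
    _ = (∑ i, powerDominationNumber (G.induce (Hs i ∪ Cs i))) + s := by
        simp only [Set.ncard_image_of_injective _ Subtype.val_injective, hBcard, add_comm]

/-- Let `G` be a graph, `C` a cut-set of `G` of size `s`, write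
`G − C = H_1 ∪ ⋯ ∪ H_m` where each `H_i` is a connected component of `G − C` (given by
the vertex sets `Hs i`), and for each `i` let `C_i ⊆ C` and let `L_i` be the subgraph
of `G` induced by `V(H_i) ∪ C_i`.  Then `γ_P(G) ≤ ∑_{i=1}^m γ_P(L_i) + s`; indeed, if
`B_i` is a minimum power dominating set of `L_i` for each `i`, then
`C ∪ ⋃_{i=1}^m B_i` is a power dominating set of `G`. -/
theorem cutset_upper_bound_general {V : Type*} [Fintype V] (G : SimpleGraph V)
    (C : Set V) (s : ℕ) (hC : C.ncard = s)
    (m : ℕ) (hm : 2 ≤ m) (Hs : Fin m → Set V)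
    (hne : ∀ i, (Hs i).Nonempty)
    (hdisj : Pairwise (Function.onFun Disjoint Hs))
    (hcover : (⋃ i, Hs i) = Cᶜ)
    (hconn : ∀ i, (G.induce (Hs i)).Connected)
    (hsep : ∀ i j, i ≠ j → ∀ u ∈ Hs i, ∀ v ∈ Hs j, ¬ G.Adj u v)
    (Cs : Fin m → Set V) (hCs : ∀ i, Cs i ⊆ C) :
    powerDominationNumber G ≤
      (∑ i, powerDominationNumber (G.induce (Hs i ∪ Cs i))) + s ∧
    ∀ B : (i : Fin m) → Set (↥(Hs i ∪ Cs i)),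
      (∀ i, IsPowerDominatingSet (G.induce (Hs i ∪ Cs i)) (B i) ∧
        (B i).ncard = powerDominationNumber (G.induce (Hs i ∪ Cs i))) →
      IsPowerDominatingSet G (C ∪ ⋃ i, Subtype.val '' B i) :=
  cutset_upper_bound_general_general G C s hC m Hs hcover hsep Cs hCs
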